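/- arXiv:2512.13334 — 3 statements merged into one kernel-verified Lean document; each statement's English description precedes it below -/
import Mathlib

section
/- A topological space X is nowhere scattered (meaning: no nonempty closed subset of X has an isolated point in its subspace topology) if and only if X contains no nonempty, scattered, locally closed subset. -/
/-- `x` is an isolated point of the subset `S` (in the subspace topology). -/
def IsolatedIn {X : Type*} [TopologicalSpace X] (S : Set X) (x : X) : Prop :=
  x ∈ S ∧ ∃ U : Set X, IsOpen U ∧ U ∩ S = {x}

/-- A space is nowhere scattered if no nonempty closed subset has an isolated point. -/
def NowhereScatteredSpace (X : Type*) [TopologicalSpace X] : Prop :=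
  ∀ C : Set X, IsClosed C → ∀ x : X, ¬ IsolatedIn C x

/-- A subset `S` is scattered if every nonempty subset of it contains a point
isolated in its subspace topology. -/
def ScatteredSet {X : Type*} [TopologicalSpace X] (S : Set X) : Prop :=
  ∀ T : Set X, T ⊆ S → T.Nonempty → ∃ x : X, IsolatedIn T x

open Set

section

variable {X : Type*} [TopologicalSpace X]

lemma isolatedIn_singleton (x : X) : IsolatedIn {x} x :=
  ⟨rfl, univ, isOpen_univ, univ_inter _⟩

lemma scatteredSet_singleton (x : X) : ScatteredSet ({x} : Set X) := by
  intro T hT hT_ne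
  rw [hT_ne.subset_singleton_iff.mp hT]
  exact ⟨x, isolatedIn_singleton x⟩

/-- A locally closed set is open in its closure, i.e. `S = closure S ∩ coborder S` with
`coborder S` open; so an isolating neighbourhood `U` of `x` in `S` can be shrunk to
`U ∩ coborder S`, which isolates `x` in `closure S`. -/
lemma IsolatedIn.closure_of_isLocallyClosed {S : Set X} {x : X} (hS : IsLocallyClosed S)
    (hx : IsolatedIn S x) : IsolatedIn (closure S) x := by
  obtain ⟨hxS, U, hU, hUS⟩ := hx
  refine ⟨subset_closure hxS, U ∩ coborder S, hU.inter hS.isOpen_coborder, ?_⟩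
  rw [inter_assoc, coborder_inter_closure, hUS]

lemma IsolatedIn.isLocallyClosed_singleton {S : Set X} {x : X} (hS : IsLocallyClosed S)
    (hx : IsolatedIn S x) : IsLocallyClosed ({x} : Set X) := by
  obtain ⟨-, U, hU, hUS⟩ := hx
  exact hUS ▸ hU.isLocallyClosed.inter hS

end

theorem stmt1 {X : Type*} [TopologicalSpace X] :
    NowhereScatteredSpace X ↔
      ¬ ∃ S : Set X, S.Nonempty ∧ ScatteredSet S ∧ IsLocallyClosed S := by
  constructor
  · rintro h ⟨S, hS_ne, hS_scattered, hS_lc⟩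
    obtain ⟨x, hx⟩ := hS_scattered S subset_rfl hS_ne
    exact h _ isClosed_closure x (hx.closure_of_isLocallyClosed hS_lc)
  · rintro h C hC x hx
    exact h ⟨{x}, singleton_nonempty x, scatteredSet_singleton x,
      hx.isLocallyClosed_singleton hC.isLocallyClosed⟩
end

section
/- Let A be a C*-algebra, let a ∈ A be positive, and let s₁, s₂ ∈ A and a positive element b ∈ A satisfy s₁ a s₁* = b, s₂ a s₂* = b, and s₁ a s₂* = 0. Define r = a^{1/2} s₁* s₂ a^{1/2}. Then r² = 0 and b³ = (s₁ a^{1/2}) (r r*) (s₁ a^{1/2})*. -/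
/-!
Write `t = a^{1/2}`, so that `t² = a` and `t* = t`, and `r = t s₁* s₂ t`. Then
`r² = t s₁* (s₂ a s₁*) s₂ t` vanishes because `s₂ a s₁* = (s₁ a s₂*)* = 0`, and
`(s₁ t) r r* (s₁ t)* = (s₁ a s₁*) (s₂ a s₂*) (s₁ a s₁*) = b³`, both being identities in any
ring with involution.
-/

theorem sandwich_mul_self_eq_zero {R : Type*} [Ring R] (t x y : R) (h : y * (t * t) * x = 0) :
    (t * (x * y) * t) * (t * (x * y) * t) = 0 := by
  calc (t * (x * y) * t) * (t * (x * y) * t) = t * x * (y * (t * t) * x) * y * t := by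
        noncomm_ring
    _ = 0 := by rw [h]; noncomm_ring

theorem conj_sandwich_mul_star {R : Type*} [Ring R] [StarRing R] (t s₁ s₂ : R)
    (ht : star t = t) :
    (s₁ * t) * ((t * (star s₁ * s₂) * t) * star (t * (star s₁ * s₂) * t)) * star (s₁ * t) =
      (s₁ * (t * t) * star s₁) * (s₂ * (t * t) * star s₂) * (s₁ * (t * t) * star s₁) := by
  simp only [star_mul, star_star, ht]
  noncomm_ring

theorem stmt9_general {A : Type*} [CStarAlgebra A] [PartialOrder A] [StarOrderedRing A] (a b s₁ s₂ : A)
    (ha : 0 ≤ a)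
    (h1 : s₁ * a * star s₁ = b) (h2 : s₂ * a * star s₂ = b)
    (h12 : s₁ * a * star s₂ = 0) :
    (CFC.sqrt a * (star s₁ * s₂) * CFC.sqrt a) *
        (CFC.sqrt a * (star s₁ * s₂) * CFC.sqrt a) = 0 ∧
      b ^ 3 =
        (s₁ * CFC.sqrt a) *
          ((CFC.sqrt a * (star s₁ * s₂) * CFC.sqrt a) *
            star (CFC.sqrt a * (star s₁ * s₂) * CFC.sqrt a)) *
          star (s₁ * CFC.sqrt a) := by
  have hsq : CFC.sqrt a * CFC.sqrt a = a := CFC.sqrt_mul_sqrt_self a ha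
  have hself : star (CFC.sqrt a) = CFC.sqrt a := (CFC.sqrt_nonneg a).isSelfAdjoint.star_eq
  have h21 : s₂ * a * star s₁ = 0 := by
    simpa only [star_mul, star_star, ha.isSelfAdjoint.star_eq, mul_assoc, star_zero]
      using congrArg star h12
  refine ⟨sandwich_mul_self_eq_zero _ _ _ (by rwa [hsq]), ?_⟩
  rw [conj_sandwich_mul_star _ _ _ hself, hsq, h1, h2, pow_three, mul_assoc]

/-- From a "2-fold copy" of `b` inside `a` one constructs a square-zero element
`r = a^{1/2} s₁* s₂ a^{1/2}` with `b³ = (s₁ a^{1/2}) (r r*) (s₁ a^{1/2})*`. -/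
theorem stmt9 {A : Type*} [CStarAlgebra A] [PartialOrder A] [StarOrderedRing A] (a b s₁ s₂ : A)
    (ha : 0 ≤ a) (hb : 0 ≤ b)
    (h1 : s₁ * a * star s₁ = b) (h2 : s₂ * a * star s₂ = b)
    (h12 : s₁ * a * star s₂ = 0) :
    (CFC.sqrt a * (star s₁ * s₂) * CFC.sqrt a) *
        (CFC.sqrt a * (star s₁ * s₂) * CFC.sqrt a) = 0 ∧
      b ^ 3 =
        (s₁ * CFC.sqrt a) *
          ((CFC.sqrt a * (star s₁ * s₂) * CFC.sqrt a) *
            star (CFC.sqrt a * (star s₁ * s₂) * CFC.sqrt a)) *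
          star (s₁ * CFC.sqrt a) :=
  stmt9_general a b s₁ s₂ ha h1 h2 h12
end

section
/- Let (S, +, ≤) be an ordered commutative monoid equipped with two auxiliary transitive relations ≪ and ⊲̂ (compact containment and 'way-below in the ideal order') such that: (a) ≪ implies ≤, (b) x ⊲̂ y and y ≤ z implies x ⊲̂ z, and (c) x ≤ y and y ⊲̂ z implies x ⊲̂ z. Assume S is ideal-filtered: for all v', v, x, y with v' ≪ v and v ⊲̂ x and v ⊲̂ y there exists z with v' ⊲̂ z, z ≤ x, and z ≤ y. Assume S has property (V): for all c, d₁, d₂, x', x with x' ≪ x, d₁ ≪ c, d₂ ≪ c, c + d₁ ≪ x, c + d₂ ≪ x, and x' ⊲̂ d₁ + d₂, there exist y, z with y + z ≤ x, x' ⊲̂ y, and x' ⊲̂ z. Suppose further that for all x' ≪ x'' ≪ x there exist d₁, d₂, c with d₁ ≪ c, d₂ ≪ c, c + d₁ ≪ x, c + d₂ ≪ x, and x'' ⊲̂ d₁ + d₂ (two-divisor weak divisibility). Then for all x', x with x' ≪ x and with an interpolant x'' satisfying x' ≪ x'' ≪ x, there exists d ∈ S with d + d ≤ x and x' ⊲̂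 d. -/
/-- Ideal-filteredness and property (V) upgrade two-divisor weak divisibility to
`(2,ω)`-divisibility, abstractly in an ordered commutative monoid. -/
theorem stmt11 {S : Type*} [AddCommMonoid S] [PartialOrder S] [IsOrderedAddMonoid S]
    (ll tr : S → S → Prop)
    (hll_trans : ∀ {x y z : S}, ll x y → ll y z → ll x z)
    (htr_trans : ∀ {x y z : S}, tr x y → tr y z → tr x z)
    (hll_le : ∀ {x y : S}, ll x y → x ≤ y)
    (htr_mono : ∀ {x y z : S}, tr x y → y ≤ z → tr x z)
    (htr_anti : ∀ {x y z : S}, x ≤ y → tr y z → tr x z)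
    (hIF : ∀ v' v x y : S, ll v' v → tr v x → tr v y →
      ∃ z : S, tr v' z ∧ z ≤ x ∧ z ≤ y)
    (hV : ∀ c d₁ d₂ x' x : S, ll x' x → ll d₁ c → ll d₂ c →
      ll (c + d₁) x → ll (c + d₂) x → tr x' (d₁ + d₂) →
      ∃ y z : S, y + z ≤ x ∧ tr x' y ∧ tr x' z)
    (hdiv : ∀ x' x'' x : S, ll x' x'' → ll x'' x →
      ∃ d₁ d₂ c : S, ll d₁ c ∧ ll d₂ c ∧ ll (c + d₁) x ∧ ll (c + d₂) x ∧
        tr x'' (d₁ + d₂)) :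
    ∀ x' x'' x : S, ll x' x → ll x' x'' → ll x'' x →
      ∃ d : S, d + d ≤ x ∧ tr x' d := by
  intro x' x'' x _ h1 h2
  obtain ⟨d₁, d₂, c, hd₁, hd₂, hc₁, hc₂, htr⟩ := hdiv x' x'' x h1 h2
  obtain ⟨y, z, hyz, hy, hz⟩ := hV c d₁ d₂ x'' x h2 hd₁ hd₂ hc₁ hc₂ htr
  obtain ⟨d, hd, hdy, hdz⟩ := hIF x' x'' y z h1 hy hz
  exact ⟨d, le_trans (add_le_add hdy hdz) hyz, hd⟩
end
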